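/- Let β ∈ (0,1], λ > 0 and t > 0. Then the mean of the fractional Poisson process satisfies ∑_{n=0}^∞ n · p_β(n|t,λ) = λ t^β / Γ(1+β). -/

import Mathlib

/-! Write `x = λ t^β`. Grouping the double series `∑ n · p_β(n)` along `m = n + k`, the
coefficient of `x^m / Γ(βm + 1)` is `∑ n C(m,n) (-1)^(m-n) = m (1 - 1)^(m-1)` (use
`n C(m,n) = m C(m-1,n-1)` and the binomial theorem), which vanishes unless `m = 1`. The
regrouping is legitimate because the series converges absolutely: the absolute row sums are
`m 2^(m-1) |x|^m / Γ(βm + 1)`, and `Γ(βm + 1) ≥ ⌊βm⌋!` outgrows every exponential. -/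

open Real

/-- pmf of the fractional Poisson process. -/
noncomputable def fracPoissonPMF (β lam t : ℝ) (n : ℕ) : ℝ :=
  (lam * t ^ β) ^ n / n.factorial *
    ∑' k : ℕ, ((n + k).factorial / k.factorial : ℝ) * (-(lam * t ^ β)) ^ k /
      Real.Gamma (β * ((k : ℝ) + n) + 1)

open Finset Filter
open scoped Nat

theorem Summable.tsum_eq_tsum_sum_antidiagonal {α : Type*} [AddCommMonoid α] [TopologicalSpace α]
    [ContinuousAdd α] [T3Space α] {f : ℕ × ℕ → α} (hf : Summable f) :
    ∑' p, f p = ∑' m, ∑ p ∈ antidiagonal m, f p := by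
  rw [← HasAntidiagonal.sigmaAntidiagonalEquivProd.tsum_eq,
    Summable.tsum_sigma' (f := fun c => f (HasAntidiagonal.sigmaAntidiagonalEquivProd c))
      (fun _ => .of_finite)
      (HasAntidiagonal.sigmaAntidiagonalEquivProd.summable_iff.mpr hf)]
  simp only [HasAntidiagonal.sigmaAntidiagonalEquivProd_apply]
  exact tsum_congr fun m => Finset.tsum_subtype (antidiagonal m) f

theorem summable_of_summable_sum_antidiagonal_norm {E : Type*} [NormedAddCommGroup E]
    [CompleteSpace E] {f : ℕ × ℕ → E}
    (hf : Summable fun m => ∑ p ∈ antidiagonal m, ‖f p‖) : Summable f := by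
  refine Summable.of_norm ?_
  rw [← HasAntidiagonal.sigmaAntidiagonalEquivProd.summable_iff]
  refine (summable_sigma_of_nonneg fun _ => norm_nonneg _).mpr ⟨fun _ => .of_finite, ?_⟩
  simp only [HasAntidiagonal.sigmaAntidiagonalEquivProd_apply]
  simpa only [Finset.tsum_subtype (antidiagonal _) fun p => ‖f p‖] using hf

theorem sum_antidiagonal_neg_one_pow_mul_mul_choose {R : Type*} [CommRing R] (m : ℕ) :
    ∑ p ∈ antidiagonal m, (-1 : R) ^ p.2 * p.1 * m.choose p.1 = if m = 1 then 1 else 0 := by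
  cases m with
  | zero => simp
  | succ j =>
    have hchoose : ∀ i, ((i + 1 : ℕ) : R) * (j + 1).choose (i + 1) = (j + 1) * j.choose i := by
      intro i
      rw [mul_comm]
      exact_mod_cast congrArg (Nat.cast : ℕ → R) (Nat.add_one_mul_choose_eq j i).symm
    rw [Nat.sum_antidiagonal_succ]
    simp only [Nat.cast_zero, mul_zero, zero_mul, zero_add, mul_assoc, hchoose]
    have hbinom : ∑ p ∈ antidiagonal j, (-1 : R) ^ p.2 * ((j + 1) * j.choose p.1)
        = (j + 1) * (1 + -1) ^ j := by
      rw [(Commute.one_left _).add_pow', mul_sum]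
      refine sum_congr rfl fun p _ => ?_
      rw [nsmul_eq_mul, one_pow, one_mul]
      ring
    rw [hbinom, add_neg_cancel]
    cases j <;> simp

theorem factorial_floor_le_Gamma_add_one {s : ℝ} (hs : 1 ≤ s) :
    (⌊s⌋₊ ! : ℝ) ≤ Gamma (s + 1) := by
  rw [← Gamma_nat_eq_factorial]
  refine Gamma_strictMonoOn_Ici.monotoneOn ?_ ?_
    (by linarith [Nat.floor_le (zero_le_one.trans hs)])
  · have : (1 : ℝ) ≤ ⌊s⌋₊ := by exact_mod_cast Nat.le_floor (by exact_mod_cast hs)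
    simp only [Set.mem_Ici]; linarith
  · simp only [Set.mem_Ici]; linarith

theorem eventually_pow_le_Gamma_mul_add_one {β : ℝ} (hβ : 0 < β) (c : ℝ) :
    ∀ᶠ m : ℕ in atTop, c ^ m ≤ Gamma (β * m + 1) := by
  set C := max |c| 1
  set K := ⌈β⁻¹⌉₊
  have hC : 1 ≤ C := le_max_right _ _
  have hy : 0 < C ^ K := by positivity
  have hβm : Tendsto (fun m : ℕ => β * m) atTop atTop :=
    tendsto_natCast_atTop_atTop.const_mul_atTop hβ
  have hfact : ∀ᶠ N : ℕ in atTop, (C ^ K) ^ (N + 1) ≤ N ! := by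
    filter_upwards [(FloorSemiring.tendsto_pow_div_factorial_atTop (C ^ K)).eventually
      (ge_mem_nhds (inv_pos.mpr hy))] with N hN
    rw [div_le_iff₀ (by positivity)] at hN
    calc (C ^ K) ^ (N + 1) = C ^ K * (C ^ K) ^ N := pow_succ' _ _
      _ ≤ C ^ K * ((C ^ K)⁻¹ * N !) := by gcongr
      _ = N ! := by field_simp
  filter_upwards [(tendsto_nat_floor_atTop.comp hβm).eventually hfact,
    hβm.eventually_ge_atTop 1] with m hN hm
  have hmK : m ≤ K * (⌊β * m⌋₊ + 1) := by
    have hlt : (m : ℝ) < β⁻¹ * (⌊β * m⌋₊ + 1) := by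
      rw [← div_eq_inv_mul, lt_div_iff₀ hβ, mul_comm]
      exact Nat.lt_floor_add_one _
    have : (m : ℝ) ≤ K * (⌊β * m⌋₊ + 1) :=
      hlt.le.trans (by gcongr; exact Nat.le_ceil _)
    exact_mod_cast this
  calc c ^ m ≤ |c| ^ m := (le_abs_self _).trans (abs_pow c m).le
    _ ≤ C ^ m := by gcongr; exact le_max_left _ _
    _ ≤ C ^ (K * (⌊β * m⌋₊ + 1)) := pow_le_pow_right₀ hC hmK
    _ = (C ^ K) ^ (⌊β * m⌋₊ + 1) := pow_mul _ _ _
    _ ≤ (⌊β * m⌋₊)! := hN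
    _ ≤ Gamma (β * m + 1) := factorial_floor_le_Gamma_add_one hm

theorem summable_pow_div_Gamma_mul_add_one {β : ℝ} (hβ : 0 < β) (r : ℝ) :
    Summable fun m : ℕ => r ^ m / Gamma (β * m + 1) := by
  refine Summable.of_norm_bounded_eventually_nat summable_geometric_two ?_
  filter_upwards [eventually_pow_le_Gamma_mul_add_one hβ (2 * |r|)] with m hm
  have hΓ : 0 < Gamma (β * m + 1) := Gamma_pos_of_pos (by positivity)
  rw [norm_div, norm_pow, Real.norm_eq_abs, Real.norm_of_nonneg hΓ.le, div_le_iff₀ hΓ]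
  calc |r| ^ m = (1 / 2) ^ m * (2 * |r|) ^ m := by rw [← mul_pow]; ring_nf
    _ ≤ (1 / 2) ^ m * Gamma (β * m + 1) := by gcongr

noncomputable def fracPoissonMeanTerm (β x : ℝ) (p : ℕ × ℕ) : ℝ :=
  p.1 * (x ^ p.1 / p.1.factorial *
    (((p.1 + p.2).factorial / p.2.factorial : ℝ) * (-x) ^ p.2 /
      Gamma (β * ((p.2 : ℝ) + p.1) + 1)))

theorem fracPoissonMeanTerm_eq (β x : ℝ) (n k : ℕ) :
    fracPoissonMeanTerm β x (n, k) =
      x ^ (n + k) / Gamma (β * (n + k : ℕ) + 1) * ((-1) ^ k * n * (n + k).choose n) := by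
  rw [fracPoissonMeanTerm, Nat.cast_add_choose, neg_pow, pow_add, Nat.cast_add, add_comm (k : ℝ)]
  field_simp

theorem sum_antidiagonal_fracPoissonMeanTerm (β x : ℝ) (m : ℕ) :
    ∑ p ∈ antidiagonal m, fracPoissonMeanTerm β x p =
      if m = 1 then x / Gamma (β + 1) else 0 := by
  have hterm : ∀ p ∈ antidiagonal m, fracPoissonMeanTerm β x p =
      x ^ m / Gamma (β * m + 1) * ((-1) ^ p.2 * p.1 * m.choose p.1) := by
    rintro ⟨n, k⟩ h
    obtain rfl : n + k = m := HasAntidiagonal.mem_antidiagonal.mp h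
    exact fracPoissonMeanTerm_eq β x n k
  rw [sum_congr rfl hterm, ← mul_sum, sum_antidiagonal_neg_one_pow_mul_mul_choose]
  split_ifs with h
  · simp [h]
  · simp

theorem sum_antidiagonal_abs_fracPoissonMeanTerm (β x : ℝ) (m : ℕ) :
    ∑ p ∈ antidiagonal m, |fracPoissonMeanTerm β x p| =
      |x| ^ m / |Gamma (β * m + 1)| * (m * 2 ^ (m - 1)) := by
  have hterm : ∀ p ∈ antidiagonal m, |fracPoissonMeanTerm β x p| =
      |x| ^ m / |Gamma (β * m + 1)| * (p.1 * m.choose p.1) := by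
    rintro ⟨n, k⟩ h
    obtain rfl : n + k = m := HasAntidiagonal.mem_antidiagonal.mp h
    rw [fracPoissonMeanTerm_eq]
    simp [abs_mul, abs_div, abs_pow]
  rw [sum_congr rfl hterm, ← mul_sum]
  congr 1
  exact_mod_cast (Nat.sum_antidiagonal_eq_sum_range_succ_mk (fun p => p.1 * m.choose p.1) m).trans
    (Nat.sum_range_mul_choose m)

theorem summable_fracPoissonMeanTerm {β : ℝ} (hβ : 0 < β) (x : ℝ) :
    Summable (fracPoissonMeanTerm β x) := by
  refine summable_of_summable_sum_antidiagonal_norm <|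
    (summable_pow_div_Gamma_mul_add_one hβ (4 * |x|)).of_nonneg_of_le
      (fun _ => sum_nonneg fun _ _ => norm_nonneg _) fun m => ?_
  have hΓ : 0 < Gamma (β * m + 1) := Gamma_pos_of_pos (by positivity)
  have hcoeff : (m * 2 ^ (m - 1) : ℝ) ≤ 4 ^ m :=
    calc (m * 2 ^ (m - 1) : ℝ) ≤ 2 ^ m * 2 ^ m := by
          gcongr
          · exact_mod_cast Nat.lt_two_pow_self.le
          · norm_num
          · exact Nat.sub_le m 1
      _ = 4 ^ m := by rw [← mul_pow]; norm_num
  simp only [Real.norm_eq_abs]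
  rw [sum_antidiagonal_abs_fracPoissonMeanTerm, abs_of_pos hΓ, mul_pow, div_mul_eq_mul_div,
    mul_comm ((4 : ℝ) ^ m)]
  gcongr

theorem fpp_mean_general (β lam t : ℝ) (hβ : β ∈ Set.Ioc (0 : ℝ) 1) :
    ∑' n : ℕ, (n : ℝ) * fracPoissonPMF β lam t n
      = lam * t ^ β / Real.Gamma (1 + β) := by
  set x := lam * t ^ β
  have hsum := summable_fracPoissonMeanTerm hβ.1 x
  have hrow : ∀ n : ℕ,
      (n : ℝ) * fracPoissonPMF β lam t n = ∑' k, fracPoissonMeanTerm β x (n, k) := by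
    intro n
    rw [fracPoissonPMF, ← tsum_mul_left, ← tsum_mul_left]
    rfl
  rw [tsum_congr hrow, ← hsum.tsum_prod, hsum.tsum_eq_tsum_sum_antidiagonal]
  simp_rw [sum_antidiagonal_fracPoissonMeanTerm]
  rw [tsum_ite_eq, add_comm]

theorem fpp_mean (β lam t : ℝ) (hβ : β ∈ Set.Ioc (0 : ℝ) 1) (hlam : 0 < lam)
    (ht : 0 < t) :
    ∑' n : ℕ, (n : ℝ) * fracPoissonPMF β lam t n
      = lam * t ^ β / Real.Gamma (1 + β) :=
  fpp_mean_general β lam t hβ
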